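/- arXiv:2108.13986 — 2 statements merged into one kernel-verified Lean document; each statement's English description precedes it below -/
import Mathlib

section
/- Let A be a Noetherian ring and M a finitely generated A-module. Then the set U_M = { p ∈ Spec(A) : M ⊗_A A_p is a flat A_p-module } is an open subset of Spec(A). -/
theorem Module.flatLocus_eq_freeLocus (R : Type*) [CommRing R] (M : Type*) [AddCommGroup M]
    [Module R M] [Module.Finite R M] :
    {p : PrimeSpectrum R |
      Module.Flat (Localization p.asIdeal.primeCompl) (LocalizedModule p.asIdeal.primeCompl M)} =
      Module.freeLocus R M := by
  ext p
  change Module.Flat (Localization.AtPrime p.asIdeal) _ ↔ _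
  exact ⟨fun _ ↦ Module.free_of_flat_of_isLocalRing, fun (_ : Module.Free _ _) ↦ inferInstance⟩

/-- **Openness of the flat locus.**  Let `A` be a Noetherian ring and `M` a finitely
generated `A`-module.  Then the set of primes `p` of `A` such that `M ⊗_A A_p` is a
flat `A_p`-module is an open subset of `Spec A`. -/
theorem flatLocus_isOpen (A : Type) [CommRing A] [IsNoetherianRing A]
    (M : Type) [AddCommGroup M] [Module A M] [Module.Finite A M] :
    IsOpen {p : PrimeSpectrum A |
      Module.Flat (Localization p.asIdeal.primeCompl)
        (LocalizedModule p.asIdeal.primeCompl M)} := by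
  have : Module.FinitePresentation A M := Module.finitePresentation_of_finite A M
  rw [Module.flatLocus_eq_freeLocus]
  exact Module.isOpen_freeLocus
end

section
/- Let K^• be a cochain complex of A-modules and N an A-module. Then there is an exact sequence of A-modules 0 → H^i(K^• ⊗_A N) → C^i(K^•) ⊗_A N → K^{i+1} ⊗_A N → C^{i+1}(K^•) ⊗_A N → 0, where C^i(K^•) denotes the cokernel of the differential K^{i−1} → K^i. -/
open TensorProduct

/-! Right exactness of `- ⊗ N` makes `C^i ⊗ N` a cokernel of `φ₀ ⊗ N` and `C^{i+1} ⊗ N` a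
cokernel of `φ₁ ⊗ N`. So it suffices that for any `f : M₀ → M₁`, any cokernel `π : M₁ → C`
of `f` and any `g : C → M₂`, the sequence
`0 → ker (g ∘ π) / (range f ∩ ker (g ∘ π)) → C → M₂ → coker (g ∘ π) → 0` is exact. -/

namespace Function.Exact

open LinearMap Submodule

variable {R M₀ M₁ M₂ C : Type*} [Ring R] [AddCommGroup M₀] [AddCommGroup M₁]
  [AddCommGroup M₂] [AddCommGroup C] [Module R M₀] [Module R M₁] [Module R M₂] [Module R C]
  {f : M₀ →ₗ[R] M₁} {π : M₁ →ₗ[R] C}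

lemma ker_comp_subtype_eq_comap_range (hfπ : Exact f π) (S : Submodule R M₁) :
    ker (π ∘ₗ S.subtype) = comap S.subtype (range f) := by
  rw [ker_comp, hfπ.linearMap_ker_eq]

def homologyToCoker (hfπ : Exact f π) (g : M₁ →ₗ[R] M₂) :
    (ker g ⧸ comap (ker g).subtype (range f)) →ₗ[R] C :=
  liftQ _ (π ∘ₗ (ker g).subtype) (hfπ.ker_comp_subtype_eq_comap_range _).ge

lemma homologyToCoker_comp_mkQ (hfπ : Exact f π) (g : M₁ →ₗ[R] M₂) :
    hfπ.homologyToCoker g ∘ₗ mkQ _ = π ∘ₗ (ker g).subtype :=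
  liftQ_mkQ _ _ _

lemma injective_homologyToCoker (hfπ : Exact f π) (g : M₁ →ₗ[R] M₂) :
    Injective (hfπ.homologyToCoker g) :=
  LinearMap.ker_eq_bot.mp <|
    ker_liftQ_eq_bot' _ _ (hfπ.ker_comp_subtype_eq_comap_range _).symm

lemma exact_homologyToCoker (hfπ : Exact f π) (hπ : Surjective π) {g : C →ₗ[R] M₂} :
    Exact (hfπ.homologyToCoker (g ∘ₗ π)) g := by
  rw [LinearMap.exact_iff, homologyToCoker, range_liftQ, range_comp, range_subtype, ker_comp,
    map_comap_eq_of_surjective hπ]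

end Function.Exact

/-- **The four-term exact sequence obtained by tensoring a cochain complex.**
Given a segment `K₀ → K₁ → K₂` of a cochain complex of `A`-modules (so the statement
at cohomological degree `i` involves `K₀ = K^{i-1}`, `K₁ = K^i`, `K₂ = K^{i+1}`) and an
`A`-module `N`, there is an exact sequence
`0 → H^i(K^• ⊗ N) → C^i(K^•) ⊗ N → K^{i+1} ⊗ N → C^{i+1}(K^•) ⊗ N → 0`,
where `C^i` denotes the cokernel of the incoming differential, the middle map is the
one induced by `φ₁ = φ^i`, and `H^i(K^• ⊗ N)` embeds via the natural map. -/
theorem fourTerm_exact_of_tensor (A : Type) [CommRing A]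
    (K₀ K₁ K₂ N : Type)
    [AddCommGroup K₀] [Module A K₀] [AddCommGroup K₁] [Module A K₁]
    [AddCommGroup K₂] [Module A K₂] [AddCommGroup N] [Module A N]
    (φ₀ : K₀ →ₗ[A] K₁) (φ₁ : K₁ →ₗ[A] K₂) (hc : φ₁.comp φ₀ = 0) :
    ∃ (f₁ : (↥(LinearMap.ker (LinearMap.rTensor N φ₁)) ⧸
          Submodule.comap (LinearMap.ker (LinearMap.rTensor N φ₁)).subtype
            (LinearMap.range (LinearMap.rTensor N φ₀))) →ₗ[A]
          ((K₁ ⧸ LinearMap.range φ₀) ⊗[A] N))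
      (f₂ : ((K₁ ⧸ LinearMap.range φ₀) ⊗[A] N) →ₗ[A] (K₂ ⊗[A] N)),
      -- `f₁` is the natural map from the homology of the tensored complex
      f₁.comp (Submodule.mkQ (Submodule.comap
            (LinearMap.ker (LinearMap.rTensor N φ₁)).subtype
            (LinearMap.range (LinearMap.rTensor N φ₀)))) =
        (LinearMap.rTensor N (LinearMap.range φ₀).mkQ).comp
          (LinearMap.ker (LinearMap.rTensor N φ₁)).subtype ∧
      -- `f₂` is induced by `φ₁`
      f₂.comp (LinearMap.rTensor N (LinearMap.range φ₀).mkQ) = LinearMap.rTensor N φ₁ ∧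
      -- exactness of the four-term sequence
      Function.Injective f₁ ∧
      Function.Exact f₁ f₂ ∧
      Function.Exact f₂ (LinearMap.rTensor N (LinearMap.range φ₁).mkQ) ∧
      Function.Surjective (LinearMap.rTensor N (LinearMap.range φ₁).mkQ) := by
  have hπ : Function.Surjective (LinearMap.rTensor N (LinearMap.range φ₀).mkQ) :=
    LinearMap.rTensor_surjective N (Submodule.mkQ_surjective _)
  have hexact₀ := rTensor_exact N (LinearMap.exact_map_mkQ_range φ₀) (Submodule.mkQ_surjective _)
  have hexact₁ := rTensor_exact N (LinearMap.exact_map_mkQ_range φ₁) (Submodule.mkQ_surjective _)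
  set f₂ := LinearMap.rTensor N ((LinearMap.range φ₀).liftQ φ₁ (LinearMap.range_le_ker_iff.mpr hc))
  have hf₂ : f₂ ∘ₗ LinearMap.rTensor N (LinearMap.range φ₀).mkQ = LinearMap.rTensor N φ₁ := by
    rw [← LinearMap.rTensor_comp, Submodule.liftQ_mkQ]
  rw [← hf₂] at hexact₁ ⊢
  exact ⟨hexact₀.homologyToCoker _, f₂, hexact₀.homologyToCoker_comp_mkQ _, rfl,
    hexact₀.injective_homologyToCoker _, hexact₀.exact_homologyToCoker hπ,
    hπ.comp_exact_iff_exact.mp hexact₁,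
    LinearMap.rTensor_surjective N (Submodule.mkQ_surjective _)⟩
end
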